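/- Fix m ≥ 1 and let f : ℤ → ℚ be defined by f(−1) = 1/3, f(0) = 1, f(1) = 4, and f(k) = 4f(k−1) − f(k−2) + 3f(k−3) for k ≥ 2. Let c = c_{m−1} ... c_0 be a codeword of NSC(m), with symbols viewed as natural numbers in {0,1,2,3}. For 0 ≤ i ≤ m−1 define y_{i,1} = 1 if i+1 ≤ m−1, c_{i+1} = 3, and c_i ∈ {1,2,3}, and y_{i,1} = 0 otherwise. Then the lexicographic index g(c) of c in NSC(m) satisfies, as an equality of rational numbers, g(c) = Σ_{i=0}^{m−1} [ (c_i − y_{i,1}) · f(i) + 3 y_{i,1} · f(i−1) ]. -/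

import Mathlib

/-!
Every word `w < c` of the code is classified by the most significant position `k` where it
differs from `c` and by its symbol `a < c_k` there. The words of a class correspond to their
lower parts `t` of length `k`; since `a ≠ 3` and `c` is admissible, the only window of `w` that
can read `3 0 3` without lying inside `t` is `c_{k+1} a t_{k-1}`. So a class contributes
`|NSC(k)| = f(k)` words, except when `c_{k+1} = 3` and `a = 0`, where the leading symbol of `t`
must not be `3`, which leaves `3 |NSC(k-1)| = 3 f(k-1)` words (for `k = 0`, one word, matching
`f(-1) = 1/3`). The identity `|NSC(k)| = f(k)` holds because `D(k)`, the number of words of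
`NSC(k)` that stay admissible when `3` is put on top, satisfies `|NSC(k+1)| = 3 |NSC(k)| + D(k)`
and `|NSC(k+2)| = D(k+2) + D(k)`.
-/

/-- The NS-LOCO code: words of length `m` over the alphabet `{0,1,2,3}`
(position `m-1` most significant) containing no contiguous subword `3 0 3`. -/
def NSC (m : ℕ) : Set (Fin m → Fin 4) :=
  {c | ∀ i : ℕ, ∀ h : i + 2 < m,
      ¬(c ⟨i + 2, h⟩ = 3 ∧ c ⟨i + 1, by omega⟩ = 0 ∧ c ⟨i, by omega⟩ = 3)}

/-- `w` is lexicographically smaller than `c` (position `m-1` most significant):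
at the most significant position where they differ, `w` has the smaller symbol. -/
def wordLT {m q : ℕ} (w c : Fin m → Fin q) : Prop :=
  ∃ k : Fin m, w k < c k ∧ ∀ j : Fin m, k < j → w j = c j

/-- The lexicographic index of `c` in the code `C`: the number of codewords of
`C` lexicographically smaller than `c`. -/
noncomputable def lexIndex {m q : ℕ} (C : Set (Fin m → Fin q)) (c : Fin m → Fin q) : ℕ :=
  {w ∈ C | wordLT w c}.ncard

/-- The natural-number value of symbol `c_i`, with an out-of-alphabet default
for out-of-range indices. -/
def extVal {m q : ℕ} (c : Fin m → Fin q) (i : ℕ) : ℕ :=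
  if h : i < m then (c ⟨i, h⟩ : ℕ) else q

/-- `y_{i,1} = 1` iff `i+1 ≤ m-1`, `c_{i+1} = 3`, and `c_i ∈ {1,2,3}`. -/
def nsY1 {m : ℕ} (c : Fin m → Fin 4) (i : ℕ) : ℚ :=
  if i + 1 < m ∧ extVal c (i + 1) = 3 ∧ extVal c i ∈ ({1, 2, 3} : Finset ℕ) then 1 else 0

open Finset
open scoped Classical

section extVal

variable {m q : ℕ} (c : Fin m → Fin q)

lemma extVal_of_lt {i : ℕ} (h : i < m) : extVal c i = c ⟨i, h⟩ := dif_pos h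

lemma extVal_of_le {i : ℕ} (h : m ≤ i) : extVal c i = q := dif_neg (not_lt.2 h)

lemma extVal_apply (i : Fin m) : extVal c i = c i := extVal_of_lt c i.isLt

lemma lt_of_extVal_ne {i : ℕ} (h : extVal c i ≠ q) : i < m := by
  by_contra hi; exact h (extVal_of_le c (not_lt.1 hi))

lemma extVal_snoc (s : Fin m → Fin q) (a : Fin q) (i : ℕ) :
    extVal (Fin.snoc s a : Fin (m + 1) → Fin q) i = if i = m then (a : ℕ) else extVal s i := by
  rcases lt_trichotomy i m with h | rfl | h
  · rw [if_neg h.ne, extVal_of_lt _ (by omega), extVal_of_lt _ h]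
    exact congrArg _ (Fin.snoc_castSucc (α := fun _ => Fin q) a s ⟨i, h⟩)
  · rw [if_pos rfl, extVal_of_lt _ (by omega)]
    exact congrArg _ (Fin.snoc_last (α := fun _ => Fin q) a s)
  · rw [if_neg h.ne', extVal_of_le _ (by omega), extVal_of_le _ h.le]

end extVal

/-- `extVal` reads `4` outside the word, so no window that sticks out of it reads `3 0 3`. -/
lemma mem_NSC_iff {m : ℕ} (c : Fin m → Fin 4) :
    c ∈ NSC m ↔
      ∀ i, ¬(extVal c (i + 2) = 3 ∧ extVal c (i + 1) = 0 ∧ extVal c i = 3) := by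
  refine forall_congr' fun i => ⟨fun H ⟨h2, h1, h0⟩ => ?_, fun H h ⟨h2, h1, h0⟩ => ?_⟩
  · have hi : i + 2 < m := lt_of_extVal_ne c (by omega)
    exact H hi ⟨Fin.ext ((extVal_of_lt c hi).symm.trans h2),
      Fin.ext ((extVal_of_lt c _).symm.trans h1), Fin.ext ((extVal_of_lt c _).symm.trans h0)⟩
  · refine H ⟨?_, ?_, ?_⟩
    · rw [extVal_of_lt c h, h2]; rfl
    · rw [extVal_of_lt c (by omega), h1]; rfl
    · rw [extVal_of_lt c (by omega), h0]; rfl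

lemma mem_NSC_of_lt_three {m : ℕ} (hm : m < 3) (c : Fin m → Fin 4) : c ∈ NSC m :=
  fun i h => absurd h (by omega)

lemma snoc_mem_NSC_iff {k : ℕ} (s : Fin k → Fin 4) (a : Fin 4) :
    (Fin.snoc s a : Fin (k + 1) → Fin 4) ∈ NSC (k + 1) ↔
      s ∈ NSC k ∧ ¬((a : ℕ) = 3 ∧ extVal s (k - 1) = 0 ∧ extVal s (k - 2) = 3) := by
  have hs : ∀ i, k ≤ i → extVal s i = 4 := fun i => extVal_of_le s
  simp only [mem_NSC_iff, extVal_snoc]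
  constructor
  · intro H
    refine ⟨fun i => ?_, fun h => ?_⟩
    · have := H i; grind
    · have := H (k - 2); grind
  · rintro ⟨H, H'⟩ i
    have := H i; grind

lemma card_filter_snoc {q k : ℕ} (P : (Fin (k + 1) → Fin q) → Prop) [DecidablePred P] :
    #{w | P w} = ∑ a, #{s : Fin k → Fin q | P (Fin.snoc s a)} := by
  simp only [card_filter]
  rw [← (Fin.snocEquiv fun _ => Fin q).sum_comp, Fintype.sum_prod_type]
  rfl

lemma card_filter_extVal_last {q k : ℕ} (P : (Fin (k + 1) → Fin q) → Prop) [DecidablePred P]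
    (a : Fin q) : #{w | P w ∧ extVal w k = a} = #{s : Fin k → Fin q | P (Fin.snoc s a)} := by
  rw [card_filter_snoc, sum_eq_single a]
  · simp [extVal_snoc]
  · intro b _ hb
    simp [extVal_snoc, Fin.val_inj, hb]
  · simp

noncomputable def nscCard (k : ℕ) : ℕ := #{t : Fin k → Fin 4 | t ∈ NSC k}

lemma nscCard_of_lt_three {k : ℕ} (hk : k < 3) : nscCard k = 4 ^ k := by
  simp [nscCard, mem_NSC_of_lt_three hk]

lemma card_snoc_mem_NSC_of_ne_three {k : ℕ} {a : Fin 4} (ha : a ≠ 3) :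
    #{s : Fin k → Fin 4 | Fin.snoc s a ∈ NSC (k + 1)} = nscCard k := by
  refine congrArg card (filter_congr fun s _ => ?_)
  rw [snoc_mem_NSC_iff]
  exact and_iff_left fun h => ha (Fin.ext h.1)

lemma nscCard_succ (k : ℕ) :
    nscCard (k + 1) = 3 * nscCard k + #{s : Fin k → Fin 4 | Fin.snoc s 3 ∈ NSC (k + 1)} := by
  rw [nscCard, card_filter_snoc, Fin.sum_univ_four, card_snoc_mem_NSC_of_ne_three (by decide),
    card_snoc_mem_NSC_of_ne_three (by decide), card_snoc_mem_NSC_of_ne_three (by decide)]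
  ring

lemma card_NSC_succ_extVal_ne_three (k : ℕ) :
    #{t : Fin (k + 1) → Fin 4 | t ∈ NSC (k + 1) ∧ extVal t k ≠ 3} = 3 * nscCard k := by
  have hsplit := card_filter_add_card_filter_not
    (s := {t : Fin (k + 1) → Fin 4 | t ∈ NSC (k + 1)}) (fun t => extVal t k = 3)
  have hlead : #{t : Fin (k + 1) → Fin 4 | t ∈ NSC (k + 1) ∧ extVal t k = 3} =
      #{s : Fin k → Fin 4 | Fin.snoc s 3 ∈ NSC (k + 1)} :=
    card_filter_extVal_last _ 3
  rw [filter_filter, filter_filter, hlead] at hsplit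
  have := nscCard_succ k
  rw [nscCard] at this
  simp only [ne_eq]
  omega

lemma nscCard_add_two (k : ℕ) :
    nscCard (k + 2) = #{s : Fin (k + 2) → Fin 4 | Fin.snoc s 3 ∈ NSC (k + 2 + 1)}
      + #{s : Fin k → Fin 4 | Fin.snoc s 3 ∈ NSC (k + 1)} := by
  have hsplit := card_filter_add_card_filter_not
    (s := {t : Fin (k + 2) → Fin 4 | t ∈ NSC (k + 2)})
    (fun t => Fin.snoc t 3 ∈ NSC (k + 2 + 1))
  have hfits :
      #{t : Fin (k + 2) → Fin 4 | t ∈ NSC (k + 2) ∧ Fin.snoc t 3 ∈ NSC (k + 2 + 1)} =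
      #{t : Fin (k + 2) → Fin 4 | Fin.snoc t 3 ∈ NSC (k + 2 + 1)} :=
    congrArg card <| filter_congr fun t _ =>
      and_iff_right_of_imp fun h => ((snoc_mem_NSC_iff t 3).1 h).1
  have hblocked :
      #{t : Fin (k + 2) → Fin 4 | t ∈ NSC (k + 2) ∧ Fin.snoc t 3 ∉ NSC (k + 2 + 1)} =
      #{s : Fin k → Fin 4 | Fin.snoc s 3 ∈ NSC (k + 1)} := by
    calc _ = #{t : Fin (k + 2) → Fin 4 |
              (t ∈ NSC (k + 2) ∧ extVal t k = 3) ∧ extVal t (k + 1) = 0} := by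
          refine congrArg card (filter_congr fun t _ => ?_)
          rw [snoc_mem_NSC_iff]
          grind
      _ = #{s : Fin (k + 1) → Fin 4 |
              Fin.snoc s 0 ∈ NSC (k + 2) ∧
                extVal (Fin.snoc s 0 : Fin (k + 2) → Fin 4) k = 3} :=
          card_filter_extVal_last (fun t => t ∈ NSC (k + 2) ∧ extVal t k = 3) 0
      _ = #{s : Fin (k + 1) → Fin 4 | s ∈ NSC (k + 1) ∧ extVal s k = 3} := by
          refine congrArg card (filter_congr fun s _ => ?_)
          rw [snoc_mem_NSC_iff, extVal_snoc, if_neg (by omega)]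
          simp
      _ = _ := card_filter_extVal_last _ 3
  rw [filter_filter, filter_filter, hfits, hblocked] at hsplit
  rw [nscCard, ← hsplit]

lemma nscCard_add_three (k : ℕ) :
    (nscCard (k + 3) : ℤ) = 4 * nscCard (k + 2) - nscCard (k + 1) + 3 * nscCard k := by
  have h₁ : nscCard (k + 3) = _ := nscCard_succ (k + 2)
  have h₂ := nscCard_add_two k
  have h₃ := nscCard_succ k
  omega

lemma nscCard_eq_of_rec (f : ℤ → ℚ) (hb1 : f (-1) = 1 / 3) (hb0 : f 0 = 1) (hb : f 1 = 4)
    (hrec : ∀ k : ℤ, 2 ≤ k → f k = 4 * f (k - 1) - f (k - 2) + 3 * f (k - 3)) (n : ℕ) :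
    (nscCard n : ℚ) = f n := by
  induction n using Nat.strong_induction_on with
  | _ n ih =>
    match n with
    | 0 => simp [nscCard_of_lt_three, hb0]
    | 1 => simp [nscCard_of_lt_three, hb]
    | 2 =>
      push_cast [nscCard_of_lt_three]
      rw [hrec 2 le_rfl]
      norm_num [hb1, hb0, hb]
    | k + 3 =>
      have h := congrArg (Int.cast (R := ℚ)) (nscCard_add_three k)
      push_cast at h
      rw [h, ih k (by omega), ih (k + 1) (by omega), ih (k + 2) (by omega)]
      push_cast
      rw [hrec (k + 3) (by omega)]
      ring_nf

lemma card_NSC_extVal_pred_ne_three {f : ℤ → ℚ} (hb1 : f (-1) = 1 / 3)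
    (hA : ∀ n : ℕ, (nscCard n : ℚ) = f n) (k : ℕ) :
    (#{t : Fin k → Fin 4 | t ∈ NSC k ∧ extVal t (k - 1) ≠ 3} : ℚ) = 3 * f (k - 1) := by
  cases k with
  | zero => simp [mem_NSC_of_lt_three, extVal_of_le, hb1]
  | succ k =>
    rw [Nat.add_sub_cancel, card_NSC_succ_extVal_ne_three]
    push_cast
    rw [hA]
    ring_nf

section lex

variable {m q : ℕ}

lemma lexIndex_eq_sum (C : Set (Fin m → Fin q)) (c : Fin m → Fin q) :
    lexIndex C c =
      ∑ k, ∑ a with a < c k, #{w | w ∈ C ∧ w k = a ∧ ∀ j, k < j → w j = c j} := by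
  have hunion : {w ∈ C | wordLT w c} =
      ↑(univ.biUnion fun k =>
        ({w | w ∈ C ∧ w k < c k ∧ ∀ j, k < j → w j = c j} : Finset _)) := by
    ext w
    simp only [wordLT, Set.mem_sep_iff, coe_biUnion, coe_filter, Set.mem_iUnion]
    aesop
  rw [lexIndex, hunion, Set.ncard_coe_finset, card_biUnion]
  · refine sum_congr rfl fun k _ => ?_
    rw [card_eq_sum_card_fiberwise (f := (· k)) (t := {a | a < c k})
      fun w hw => by simpa using (mem_filter.1 hw).2.2.1]
    refine sum_congr rfl fun a ha => congrArg card ?_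
    ext w
    simp only [mem_filter, mem_univ, true_and] at ha ⊢
    constructor
    · rintro ⟨⟨hw, -, htail⟩, rfl⟩; exact ⟨hw, rfl, htail⟩
    · rintro ⟨hw, rfl, htail⟩; exact ⟨⟨hw, ha, htail⟩, rfl⟩
  · intro k _ k' _ hne
    refine disjoint_left.2 fun w hw hw' => ?_
    simp only [mem_filter, mem_univ, true_and] at hw hw'
    rcases hne.lt_or_gt with h | h
    · exact (hw.2.2 k' h ▸ hw'.2.1).false
    · exact (hw'.2.2 k h ▸ hw.2.1).false

def splice (c : Fin m → Fin q) (k : Fin m) (a : Fin q) (t : Fin k → Fin q) : Fin m → Fin q :=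
  fun j => if h : (j : ℕ) < k then t ⟨j, h⟩ else if j = k then a else c j

variable (c : Fin m → Fin q) (k : Fin m) (a : Fin q)

lemma splice_castLE (t : Fin k → Fin q) (i : Fin k) :
    splice c k a t (Fin.castLE k.isLt.le i) = t i := by
  simp [splice]

lemma splice_self (t : Fin k → Fin q) : splice c k a t k = a := by
  simp [splice]

lemma splice_of_lt (t : Fin k → Fin q) {j : Fin m} (hj : k < j) : splice c k a t j = c j := by
  simp [splice, hj.ne', not_lt.2 hj.le]

lemma splice_comp_castLE {w : Fin m → Fin q} (hk : w k = a) (htail : ∀ j, k < j → w j = c j) :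
    splice c k a (w ∘ Fin.castLE k.isLt.le) = w := by
  funext j
  simp only [splice, Function.comp_apply]
  split_ifs with h h'
  · rfl
  · exact h' ▸ hk.symm
  · exact (htail j (by omega)).symm

lemma card_filter_agree_above (P : (Fin m → Fin q) → Prop) [DecidablePred P] :
    #{w | P w ∧ w k = a ∧ ∀ j, k < j → w j = c j} =
      #{t : Fin k → Fin q | P (splice c k a t)} := by
  refine (card_nbij' (splice c k a) (· ∘ Fin.castLE k.isLt.le) ?_ ?_ ?_ ?_).symm
  · intro t ht
    simp only [coe_filter, mem_univ, true_and, Set.mem_ofPred_eq] at ht ⊢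
    exact ⟨ht, splice_self c k a t, fun j hj => splice_of_lt c k a t hj⟩
  · intro w hw
    simp only [coe_filter, mem_univ, true_and, Set.mem_ofPred_eq] at hw ⊢
    rw [splice_comp_castLE c k a hw.2.1 hw.2.2]
    exact hw.1
  · exact fun t _ => funext (splice_castLE c k a t)
  · intro w hw
    simp only [coe_filter, mem_univ, true_and, Set.mem_ofPred_eq] at hw
    exact splice_comp_castLE c k a hw.2.1 hw.2.2

lemma extVal_splice (t : Fin k → Fin q) (i : ℕ) :
    extVal (splice c k a t) i =
      if i < k then extVal t i else if i = k then (a : ℕ) else extVal c i := by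
  split_ifs with h h'
  · rw [extVal_of_lt t h, extVal_of_lt _ (h.trans k.isLt)]
    simp [splice, h]
  · subst h'
    rw [extVal_apply, splice_self]
  · by_cases hm : i < m
    · rw [extVal_of_lt _ hm, extVal_of_lt _ hm]
      simp [splice, h, Fin.ext_iff, h']
    · rw [extVal_of_le _ (not_lt.1 hm), extVal_of_le _ (not_lt.1 hm)]

end lex

lemma splice_mem_NSC_iff {m : ℕ} {c : Fin m → Fin 4} (hc : c ∈ NSC m) (k : Fin m) {a : Fin 4}
    (ha : a ≠ 3) (t : Fin k → Fin 4) :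
    splice c k a t ∈ NSC m ↔
      t ∈ NSC k ∧ ¬(extVal c (k + 1) = 3 ∧ a = 0 ∧ extVal t (k - 1) = 3) := by
  have ht : ∀ i : ℕ, k ≤ i → extVal t i = 4 := fun i => extVal_of_le t
  have ha' : (a : ℕ) ≠ 3 := fun h => ha (Fin.ext h)
  rw [mem_NSC_iff] at hc
  simp only [mem_NSC_iff, extVal_splice]
  constructor
  · intro H
    refine ⟨fun i => ?_, fun h => ?_⟩
    · have := H i; grind
    · have := H (k - 1); grind
  · rintro ⟨H, H'⟩ i
    have := H i; have := hc i; grind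

lemma card_NSC_agree_above_of_lt {m : ℕ} {c : Fin m → Fin 4} (hc : c ∈ NSC m) (k : Fin m)
    {a : Fin 4} (ha : a < c k) :
    #{w | w ∈ NSC m ∧ w k = a ∧ ∀ j, k < j → w j = c j} =
      if extVal c (k + 1) = 3 ∧ a = 0
      then #{t : Fin k → Fin 4 | t ∈ NSC k ∧ extVal t (k - 1) ≠ 3} else nscCard k := by
  have ha3 : a ≠ 3 := fun h => absurd (h ▸ ha) (not_lt.2 (Fin.le_last _))
  rw [card_filter_agree_above]
  simp only [splice_mem_NSC_iff hc k ha3]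
  split_ifs with h
  · simp [h.1, h.2]
  · exact congrArg card (filter_congr fun t _ => and_iff_left fun h' => h ⟨h'.1, h'.2.1⟩)

lemma sum_filter_lt_ite_eq_zero (v : Fin 4) (p : Prop) [Decidable p] (X Y : ℚ) :
    ∑ a with a < v, (if p ∧ a = 0 then X else Y) =
      ((v : ℕ) - (if p ∧ v ≠ 0 then 1 else 0)) * Y +
        (if p ∧ v ≠ 0 then 1 else 0) * X := by
  by_cases hp : p
  · fin_cases v <;> simp [sum_filter, Fin.sum_univ_four, hp] <;> ring
  · simp [hp, filter_gt_eq_Iio]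

lemma nsY1_eq {m : ℕ} (c : Fin m → Fin 4) (k : Fin m) :
    nsY1 c k = if extVal c (k + 1) = 3 ∧ c k ≠ 0 then 1 else 0 := by
  have hk := (c k).isLt
  have hne : c k ≠ 0 ↔ (c k : ℕ) ≠ 0 := Fin.val_ne_iff.symm
  rw [nsY1, extVal_apply]
  refine if_congr ?_ rfl rfl
  simp only [mem_insert, mem_singleton]
  constructor
  · rintro ⟨-, h3, hv⟩; exact ⟨h3, hne.2 (by omega)⟩
  · rintro ⟨h3, hv⟩; exact ⟨lt_of_extVal_ne c (by omega), h3, by omega⟩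

theorem stmt15_general (m : ℕ) (f : ℤ → ℚ)
    (hb1 : f (-1) = 1 / 3) (hb0 : f 0 = 1) (hb : f 1 = 4)
    (hrec : ∀ k : ℤ, 2 ≤ k → f k = 4 * f (k - 1) - f (k - 2) + 3 * f (k - 3))
    (c : Fin m → Fin 4) (hc : c ∈ NSC m) :
    (lexIndex (NSC m) c : ℚ) =
      ∑ i : Fin m,
        ((((c i : ℕ) : ℚ) - nsY1 c (i : ℕ)) * f ((i : ℕ) : ℤ)
          + 3 * nsY1 c (i : ℕ) * f (((i : ℕ) : ℤ) - 1)) := by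
  have hA := nscCard_eq_of_rec f hb1 hb0 hb hrec
  rw [lexIndex_eq_sum]
  push_cast
  refine sum_congr rfl fun k _ => ?_
  rw [sum_congr rfl fun a ha => by rw [card_NSC_agree_above_of_lt hc k (mem_filter.1 ha).2]]
  push_cast [apply_ite, card_NSC_extVal_pred_ne_three hb1 hA, hA]
  rw [sum_filter_lt_ite_eq_zero, nsY1_eq]
  split_ifs <;> ring

theorem stmt15 (m : ℕ) (hm : 1 ≤ m) (f : ℤ → ℚ)
    (hb1 : f (-1) = 1 / 3) (hb0 : f 0 = 1) (hb : f 1 = 4)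
    (hrec : ∀ k : ℤ, 2 ≤ k → f k = 4 * f (k - 1) - f (k - 2) + 3 * f (k - 3))
    (c : Fin m → Fin 4) (hc : c ∈ NSC m) :
    (lexIndex (NSC m) c : ℚ) =
      ∑ i : Fin m,
        ((((c i : ℕ) : ℚ) - nsY1 c (i : ℕ)) * f ((i : ℕ) : ℤ)
          + 3 * nsY1 c (i : ℕ) * f (((i : ℕ) : ℤ) - 1)) :=
  stmt15_general m f hb1 hb0 hb hrec c hc
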